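/- For every integer q ≥ 1, cap(q) ≤ cap(q+1). -/

import Mathlib

open Filter

/-- The length-`C` prefix of the cyclically alternating sequence `1,2,…,q,1,2,…,q,…`:
its `i`-th symbol (1-indexed) is `((i-1) mod q) + 1`. -/
def altSeq (q C : ℕ) : List ℕ := (List.range C).map (fun i => i % q + 1)

/-- `M q C L`: the number of distinct length-`L` subsequences of `altSeq q C`. -/
def M (q C L : ℕ) : ℕ :=
  ((altSeq q C).sublists.toFinset.filter (fun s => s.length = L)).card

/-- `cap q = limsup_{C→∞} log₂ (Σ_{L=0}^{C} M_q(C,L)) / C`. -/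
noncomputable def capFlex (q : ℕ) : ℝ :=
  Filter.atTop.limsup
    (fun C : ℕ => Real.logb 2 (∑ L ∈ Finset.range (C + 1), M q C L) / C)

/-! ### Auxiliary combinatorics -/

/-- The piece of the alternating word on positions `p, p+1, …, p+n-1` (0-indexed). -/
def Alt (q p n : ℕ) : List ℕ := (List.range' p n).map (fun i => i % q + 1)

/-- Gap list (leftmost embedding gaps) of a word, given the previous symbol `prev`. -/
def gapsAux (q : ℕ) : ℕ → List ℕ → List ℕ
  | _, [] => []
  | prev, a :: t => (((q - prev) + (a - 1)) % q + 1) :: gapsAux q a t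

/-- Word read off from a gap list, starting at position `p` (0-indexed next free slot). -/
def wordAux (q : ℕ) : ℕ → List ℕ → List ℕ
  | _, [] => []
  | p, g :: l => ((p + g - 1) % q + 1) :: wordAux q (p + g) l

lemma altSeq_eq_Alt (q C : ℕ) : altSeq q C = Alt q 0 C := by
  simp [altSeq, Alt, List.range_eq_range']

lemma alt_succ (q p n : ℕ) : Alt q p (n + 1) = (p % q + 1) :: Alt q (p + 1) n := by
  simp [Alt, List.range'_succ]

lemma alt_append (q p m n : ℕ) : Alt q p (m + n) = Alt q p m ++ Alt q (p + m) n := by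
  have h := List.range'_append (s := p) (m := m) (n := n) (step := 1)
  simp only [one_mul] at h
  simp only [Alt, ← List.map_append, Nat.add_comm m n]
  rw [h, Nat.add_comm m n]

lemma key_mod (q p prev x : ℕ) (h2 : prev ≤ q) (h : p % q = prev % q) :
    (p + (q - prev) + x) % q = x % q := by
  have h1 : (p + (q - prev)) % q = 0 := by
    have e1 : (p + (q - prev)) % q = (p % q + (q - prev)) % q := (Nat.mod_add_mod p q _).symm
    rw [e1, h, Nat.mod_add_mod, Nat.add_sub_cancel' h2, Nat.mod_self]
  calc (p + (q - prev) + x) % q = ((p + (q - prev)) % q + x) % q :=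
        (Nat.mod_add_mod _ q x).symm
    _ = x % q := by rw [h1, Nat.zero_add]

lemma split_sublist (q : ℕ) : ∀ (n p a : ℕ) (t : List ℕ), (a :: t).Sublist (Alt q p n) →
    ∃ k, k < n ∧ a = (p + k) % q + 1 ∧ t.Sublist (Alt q (p + k + 1) (n - k - 1)) := by
  intro n
  induction n with
  | zero => intro p a t h; simp [Alt] at h
  | succ n ih =>
    intro p a t h
    rw [alt_succ] at h
    cases h with
    | cons _ h' =>
      obtain ⟨k, hk, ha, ht⟩ := ih (p + 1) a t h'
      refine ⟨k + 1, by omega, ?_, ?_⟩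
      · rw [ha]; congr 2; omega
      · have e1 : p + (k + 1) + 1 = p + 1 + k + 1 := by omega
        have e2 : n + 1 - (k + 1) - 1 = n - k - 1 := by omega
        rw [e1, e2]; exact ht
    | cons_cons _ h' =>
      refine ⟨0, by omega, by simp, ?_⟩
      simpa using h'

lemma word_sublist (q : ℕ) : ∀ (l : List ℕ) (p n : ℕ), (∀ g ∈ l, 1 ≤ g) → l.sum ≤ n →
    (wordAux q p l).Sublist (Alt q p n) := by
  intro l
  induction l with
  | nil => intro p n _ _; exact List.nil_sublist _
  | cons g l ih =>
    intro p n hmem hsum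
    have hg : 1 ≤ g := hmem g (by simp)
    have hsum' : g + l.sum ≤ n := by simpa using hsum
    have hrest := ih (p + g) (n - g) (fun x hx => hmem x (by simp [hx])) (by omega)
    have e1 : p + (g - 1) = p + g - 1 := by omega
    have e2 : p + g - 1 + 1 = p + g := by omega
    have hd : Alt q p n = Alt q p (g - 1) ++ ((p + g - 1) % q + 1) :: Alt q (p + g) (n - g) := by
      have e : n = (g - 1) + ((n - g) + 1) := by omega
      rw [show Alt q p n = Alt q p ((g - 1) + ((n - g) + 1)) from by rw [← e],
        alt_append, alt_succ, e1, e2]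
    rw [hd]
    show List.Sublist (((p + g - 1) % q + 1) :: wordAux q (p + g) l) _
    exact (List.Sublist.cons₂ _ hrest).trans (List.sublist_append_right _ _)

lemma gaps_mem (q : ℕ) (hq : 1 ≤ q) : ∀ (s : List ℕ) (prev g : ℕ),
    g ∈ gapsAux q prev s → 1 ≤ g ∧ g ≤ q := by
  intro s
  induction s with
  | nil => intro prev g h; simp [gapsAux] at h
  | cons a t ih =>
    intro prev g h
    simp only [gapsAux, List.mem_cons] at h
    rcases h with rfl | h
    · have : ((q - prev) + (a - 1)) % q < q := Nat.mod_lt _ (by omega)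
      omega
    · exact ih a g h

lemma gaps_sum_le (q : ℕ) (hq : 1 ≤ q) : ∀ (s : List ℕ) (p n prev : ℕ),
    s.Sublist (Alt q p n) → 1 ≤ prev → prev ≤ q → p % q = prev % q →
    (gapsAux q prev s).sum ≤ n := by
  intro s
  induction s with
  | nil => intro p n prev _ _ _ _; simp [gapsAux]
  | cons a t ih =>
    intro p n prev h h1 h2 h3
    obtain ⟨k, hk, ha, ht⟩ := split_sublist q n p a t h
    have hpk : (p + k) % q < q := Nat.mod_lt _ (by omega)
    have ha1 : 1 ≤ a := by omega
    have ha2 : a ≤ q := by omega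
    have hg : ((q - prev) + (a - 1)) % q = k % q := by
      have e1 : (q - prev) + (a - 1) = (q - prev) + (p + k) % q := by omega
      rw [e1]
      calc ((q - prev) + (p + k) % q) % q = ((q - prev) + (p + k)) % q :=
            Nat.add_mod_mod _ _ q
        _ = (p + (q - prev) + k) % q := by congr 1; omega
        _ = k % q := key_mod q p prev k h2 h3
    have hinv : (p + k + 1) % q = a % q := by
      rw [ha]; exact (Nat.mod_add_mod (p + k) q 1).symm
    have hrest : (gapsAux q a t).sum ≤ n - k - 1 := ih (p + k + 1) (n - k - 1) a ht ha1 ha2 hinv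
    have hsum : (gapsAux q prev (a :: t)).sum
        = k % q + 1 + (gapsAux q a t).sum := by
      simp [gapsAux, hg]
      try ring
    rw [hsum]
    have h5 : k % q ≤ k := Nat.mod_le k q
    omega

lemma word_gaps (q : ℕ) (hq : 1 ≤ q) : ∀ (s : List ℕ) (p prev : ℕ),
    (∀ a ∈ s, 1 ≤ a ∧ a ≤ q) → 1 ≤ prev → prev ≤ q → p % q = prev % q →
    wordAux q p (gapsAux q prev s) = s := by
  intro s
  induction s with
  | nil => intro p prev _ _ _ _; simp [gapsAux, wordAux]
  | cons a t ih =>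
    intro p prev hmem h1 h2 h3
    obtain ⟨ha1, ha2⟩ := hmem a (by simp)
    set X := (q - prev) + (a - 1) with hX
    have e1 : p + (X % q + 1) - 1 = p + X % q := by omega
    have hhead : (p + (X % q + 1) - 1) % q + 1 = a := by
      rw [e1]
      have : (p + X % q) % q = (a - 1) % q := by
        calc (p + X % q) % q = (p + X) % q := Nat.add_mod_mod _ _ q
          _ = (p + (q - prev) + (a - 1)) % q := by congr 1; omega
          _ = (a - 1) % q := key_mod q p prev (a - 1) h2 h3
      rw [this, Nat.mod_eq_of_lt (by omega)]
      omega
    have hinv : (p + (X % q + 1)) % q = a % q := by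
      calc (p + (X % q + 1)) % q = (p + 1 + X % q) % q := by congr 1; omega
        _ = (p + 1 + X) % q := Nat.add_mod_mod _ _ q
        _ = (p + (q - prev) + a) % q := by congr 1; omega
        _ = a % q := key_mod q p prev a h2 h3
    have htail := ih (p + (X % q + 1)) a (fun x hx => hmem x (by simp [hx])) ha1 ha2 hinv
    show ((p + (X % q + 1) - 1) % q + 1) :: wordAux q (p + (X % q + 1)) (gapsAux q a t) = a :: t
    rw [hhead, htail]

lemma gaps_word (Q : ℕ) (hQ : 1 ≤ Q) : ∀ (l : List ℕ) (p prev : ℕ),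
    (∀ g ∈ l, 1 ≤ g ∧ g ≤ Q) → 1 ≤ prev → prev ≤ Q → p % Q = prev % Q →
    gapsAux Q prev (wordAux Q p l) = l := by
  intro l
  induction l with
  | nil => intro p prev _ _ _ _; simp [gapsAux, wordAux]
  | cons g l ih =>
    intro p prev hmem h1 h2 h3
    obtain ⟨hg1, hg2⟩ := hmem g (by simp)
    set a := (p + g - 1) % Q + 1 with ha
    have haQ : (p + g - 1) % Q < Q := Nat.mod_lt _ (by omega)
    have hgap : ((Q - prev) + (a - 1)) % Q + 1 = g := by
      have : ((Q - prev) + (a - 1)) % Q = (g - 1) % Q := by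
        calc ((Q - prev) + (a - 1)) % Q = ((Q - prev) + (p + g - 1) % Q) % Q := by
              congr 2 <;> omega
          _ = ((Q - prev) + (p + g - 1)) % Q := Nat.add_mod_mod _ _ Q
          _ = (p + (Q - prev) + (g - 1)) % Q := by congr 1; omega
          _ = (g - 1) % Q := key_mod Q p prev (g - 1) h2 h3
      rw [this, Nat.mod_eq_of_lt (by omega)]
      omega
    have hinv : (p + g) % Q = a % Q := by
      have : a % Q = ((p + g - 1) + 1) % Q := by
        rw [ha]; exact Nat.mod_add_mod _ Q 1
      rw [this]; congr 1; omega
    have htail := ih (p + g) a (fun x hx => hmem x (by simp [hx])) (by omega) (by omega) hinv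
    show (((Q - prev) + (a - 1)) % Q + 1) :: gapsAux Q a (wordAux Q (p + g) l) = g :: l
    rw [hgap, htail]

lemma alt_mem (q p n : ℕ) (hq : 1 ≤ q) : ∀ a ∈ Alt q p n, 1 ≤ a ∧ a ≤ q := by
  intro a ha
  simp only [Alt, List.mem_map] at ha
  obtain ⟨i, _, rfl⟩ := ha
  have : i % q < q := Nat.mod_lt _ (by omega)
  omega

lemma card_mono (q C : ℕ) (hq : 1 ≤ q) :
    (altSeq q C).sublists.toFinset.card ≤ (altSeq (q + 1) C).sublists.toFinset.card := by
  have h0q : (0 : ℕ) % q = q % q := by simp [Nat.mod_self]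
  have h0q1 : (0 : ℕ) % (q + 1) = (q + 1) % (q + 1) := by simp [Nat.mod_self]
  apply Finset.card_le_card_of_injOn (fun s => wordAux (q + 1) 0 (gapsAux q q s))
  · intro s hs
    have hsub : s.Sublist (Alt q 0 C) := by
      rw [← altSeq_eq_Alt]
      simpa [List.mem_sublists] using hs
    have hsum : (gapsAux q q s).sum ≤ C := gaps_sum_le q hq s 0 C q hsub hq le_rfl h0q
    have hw := word_sublist (q + 1) (gapsAux q q s) 0 C
      (fun g hg => (gaps_mem q hq s q g hg).1) hsum
    simp only [Finset.mem_coe, List.mem_toFinset, List.mem_sublists]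
    rw [altSeq_eq_Alt]
    exact hw
  · intro s1 hs1 s2 hs2 heq
    simp only [Finset.coe_sort_coe] at heq
    have hsub1 : s1.Sublist (Alt q 0 C) := by
      rw [← altSeq_eq_Alt]; simpa [List.mem_sublists] using hs1
    have hsub2 : s2.Sublist (Alt q 0 C) := by
      rw [← altSeq_eq_Alt]; simpa [List.mem_sublists] using hs2
    have hmem1 : ∀ a ∈ s1, 1 ≤ a ∧ a ≤ q := fun a ha =>
      alt_mem q 0 C hq a (hsub1.mem ha)
    have hmem2 : ∀ a ∈ s2, 1 ≤ a ∧ a ≤ q := fun a ha =>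
      alt_mem q 0 C hq a (hsub2.mem ha)
    have hrec1 := gaps_word (q + 1) (by omega) (gapsAux q q s1) 0 (q + 1)
      (fun g hg => ⟨(gaps_mem q hq s1 q g hg).1, by have := (gaps_mem q hq s1 q g hg).2; omega⟩)
      (by omega) le_rfl h0q1
    have hrec2 := gaps_word (q + 1) (by omega) (gapsAux q q s2) 0 (q + 1)
      (fun g hg => ⟨(gaps_mem q hq s2 q g hg).1, by have := (gaps_mem q hq s2 q g hg).2; omega⟩)
      (by omega) le_rfl h0q1
    have hgaps : gapsAux q q s1 = gapsAux q q s2 := by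
      rw [← hrec1, ← hrec2, heq]
    have hw1 := word_gaps q hq s1 0 q hmem1 hq le_rfl h0q
    have hw2 := word_gaps q hq s2 0 q hmem2 hq le_rfl h0q
    rw [← hw1, ← hw2, hgaps]

lemma sum_M_eq (q C : ℕ) :
    (∑ L ∈ Finset.range (C + 1), M q C L) = (altSeq q C).sublists.toFinset.card := by
  symm
  apply Finset.card_eq_sum_card_fiberwise (f := List.length) (t := Finset.range (C + 1))
  intro s hs
  have hsub : s.Sublist (altSeq q C) := by simpa [List.mem_sublists] using hs
  have := hsub.length_le
  simp only [altSeq, List.length_map, List.length_range] at this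
  simp only [Finset.mem_coe, Finset.mem_range]
  omega

lemma one_le_total (q C : ℕ) : 1 ≤ (altSeq q C).sublists.toFinset.card := by
  apply Finset.card_pos.2
  exact ⟨[], by simp [List.mem_sublists]⟩

lemma total_le (q C : ℕ) : (altSeq q C).sublists.toFinset.card ≤ 2 ^ C := by
  calc (altSeq q C).sublists.toFinset.card ≤ (altSeq q C).sublists.length :=
        List.toFinset_card_le _
    _ = 2 ^ C := by simp [List.length_sublists, altSeq]

lemma cast_sum_eq (q C : ℕ) :
    (∑ L ∈ Finset.range (C + 1), (M q C L : ℝ)) = ((altSeq q C).sublists.toFinset.card : ℝ) := by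
  rw [← Nat.cast_sum, sum_M_eq]

theorem stmt6 (q : ℕ) (hq : 1 ≤ q) : capFlex q ≤ capFlex (q + 1) := by
  unfold capFlex
  apply Filter.limsup_le_limsup
  · apply Filter.Eventually.of_forall
    intro C
    rcases Nat.eq_zero_or_pos C with rfl | hC
    · simp
    · rw [div_le_div_iff_of_pos_right (by exact_mod_cast hC : (0:ℝ) < (C:ℝ))]
      apply Real.logb_le_logb_of_le (by norm_num)
      · rw [cast_sum_eq]
        have h1 := one_le_total q C
        have : (1:ℝ) ≤ ((altSeq q C).sublists.toFinset.card : ℝ) := by exact_mod_cast h1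
        linarith
      · rw [cast_sum_eq, cast_sum_eq]
        exact_mod_cast card_mono q C hq
  · apply Filter.IsBoundedUnder.isCoboundedUnder_le
    apply Filter.isBoundedUnder_of
    refine ⟨0, fun C => ?_⟩
    apply div_nonneg _ (by positivity)
    apply Real.logb_nonneg (by norm_num)
    rw [cast_sum_eq]
    exact_mod_cast one_le_total q C
  · apply Filter.isBoundedUnder_of
    refine ⟨1, fun C => ?_⟩
    rcases Nat.eq_zero_or_pos C with rfl | hC
    · simp
    · rw [div_le_one (by exact_mod_cast hC : (0:ℝ) < (C:ℝ))]
      rw [cast_sum_eq]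
      have hle : (((altSeq (q+1) C).sublists.toFinset.card : ℕ) : ℝ) ≤ (2 : ℝ) ^ C := by
        exact_mod_cast total_le (q+1) C
      have hpos : (1 : ℝ) ≤ (((altSeq (q+1) C).sublists.toFinset.card : ℕ) : ℝ) := by
        exact_mod_cast one_le_total (q+1) C
      calc Real.logb 2 _ ≤ Real.logb 2 ((2:ℝ) ^ C) :=
            Real.logb_le_logb_of_le (by norm_num) (by linarith) hle
        _ = (C : ℝ) := by
            rw [Real.logb_pow, Real.logb_self_eq_one (by norm_num)]
            ring
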